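/- The family (B_{g,h,𝔠}) indexed by {(g,h,𝔠) : g,h ∈ E, 𝔠 ∈ U_{g,h}} is an F-basis of T (linearly independent over F and spanning T), and the cardinality of this index set equals 2^{n_1+2n_4} · 3^{n_4} · 5^{n_1} · 11^{n_2+n_3}. -/

import Mathlib

open scoped Classical

namespace GDScheme

variable {n : ℕ}

/-- The vertex set of the direct product of the group divisible schemes
`GD(ℓ i, m i)`. -/
abbrev Pt (ℓ m : Fin n → ℕ) : Type := ∀ i : Fin n, Fin (ℓ i) × Fin (m i)

/-- The index set `E` of the scheme: `n`-tuples with entries in `{0,1,2}`. -/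
abbrev Lbl (n : ℕ) : Type := Fin n → Fin 3

/-- The relations of a single group divisible scheme. -/
def rel1 {a b : ℕ} (j : Fin 3) (u v : Fin a × Fin b) : Prop :=
  if j = 0 then u = v
  else if j = 1 then u ≠ v ∧ u.1 = v.1
  else u.1 ≠ v.1

/-- The relation `R_g` of the direct product scheme. -/
def Rel (ℓ m : Fin n → ℕ) (g : Lbl n) (y z : Pt ℓ m) : Prop :=
  ∀ i : Fin n, rel1 (g i) (y i) (z i)

/-- The adjacency matrix `A_g`. -/
noncomputable def Amat (F : Type) [Field F] (ℓ m : Fin n → ℕ) (g : Lbl n) :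
    Matrix (Pt ℓ m) (Pt ℓ m) F :=
  fun y z => if Rel ℓ m g y z then 1 else 0

/-- The dual idempotent `E*_g` with respect to the base point `x`. -/
noncomputable def Estar (F : Type) [Field F] (ℓ m : Fin n → ℕ) (x : Pt ℓ m) (g : Lbl n) :
    Matrix (Pt ℓ m) (Pt ℓ m) F :=
  Matrix.diagonal fun y => if Rel ℓ m g x y then 1 else 0

/-- The Terwilliger `F`-algebra with respect to the base point `x`. -/
noncomputable def Talg (F : Type) [Field F] (ℓ m : Fin n → ℕ) (x : Pt ℓ m) :
    Subalgebra F (Matrix (Pt ℓ m) (Pt ℓ m) F) :=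
  Algebra.adjoin F (Set.range (Amat F ℓ m) ∪ Set.range (Estar F ℓ m x))

/-- `𝕘_j = {i : g i = j}`. -/
def lset (g : Lbl n) (j : Fin 3) : Finset (Fin n) :=
  Finset.univ.filter fun i => g i = j

/-- `V^• = {a ∈ V : ℓ a > 2}`. -/
def bullet (ℓ : Fin n → ℕ) (V : Finset (Fin n)) : Finset (Fin n) :=
  V.filter fun a => 2 < ℓ a

/-- `V^∘ = {a ∈ V : m a > 2}`. -/
def circ (m : Fin n → ℕ) (V : Finset (Fin n)) : Finset (Fin n) :=
  V.filter fun a => 2 < m a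

/-- `(g, h, i) ∈ P`. -/
def MemP (ℓ m : Fin n → ℕ) (g h i : Lbl n) : Prop :=
  (lset g 0 ∩ lset h 1 ∪ lset g 1 ∩ lset h 0) ⊆ lset i 1 ∧
  lset i 1 ⊆
    (lset g 0 ∩ lset h 1 ∪ lset g 1 ∩ lset h 0 ∪ circ m (lset g 1 ∩ lset h 1) ∪
      lset g 2 ∩ lset h 2) ∧
  ((lset g 2 \ lset h 2) ∪ (lset h 2 \ lset g 2)) ⊆ lset i 2 ∧
  lset i 2 ⊆ ((lset g 2 \ lset h 2) ∪ (lset h 2 \ lset g 2) ∪ bullet ℓ (lset g 2 ∩ lset h 2))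

/-- Triples of subsets of `{1, …, n}`. -/
abbrev Trip (n : ℕ) : Type := Finset (Fin n) × Finset (Fin n) × Finset (Fin n)

/-- `𝔠 ∈ U_{g,h}`. -/
def MemU (ℓ m : Fin n → ℕ) (g h : Lbl n) (c : Trip n) : Prop :=
  c.1 ⊆ circ m (lset g 1 ∩ lset h 1) ∧ c.2.1 ⊆ bullet ℓ (lset g 2 ∩ lset h 2) ∧
  c.2.1 ⊆ c.2.2 ∧ c.2.2 ⊆ lset g 2 ∩ lset h 2

/-- `a ∈ U_{g,h,𝔠}`. -/
def MemUc (ℓ m : Fin n → ℕ) (g h : Lbl n) (c : Trip n) (a : Lbl n) : Prop :=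
  MemP ℓ m g h a ∧
  lset a 1 ∩ circ m (lset g 1 ∩ lset h 1) ⊆ c.1 ∧
  lset a 2 ∩ bullet ℓ (lset g 2 ∩ lset h 2) ⊆ c.2.1 ∧
  lset a 1 ∩ (lset g 2 ∩ lset h 2) ⊆ c.2.2

/-- The matrix `B_{g,h,𝔠} = Σ_{a ∈ U_{g,h,𝔠}} E*_g A_a E*_h`. -/
noncomputable def Bmat (F : Type) [Field F] (ℓ m : Fin n → ℕ) (x : Pt ℓ m)
    (g h : Lbl n) (c : Trip n) : Matrix (Pt ℓ m) (Pt ℓ m) F :=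
  ∑ a ∈ Finset.univ.filter (fun a : Lbl n => MemUc ℓ m g h c a),
    Estar F ℓ m x g * Amat F ℓ m a * Estar F ℓ m x h

/-- `k_{(U,V,W)}`. -/
def kUVW (ℓ m : Fin n → ℕ) (U V W : Finset (Fin n)) : ℕ :=
  (∏ j ∈ U, (m j - 1)) * (∏ k ∈ V, (ℓ k - 1) * m k) * ∏ l ∈ W \ V, m l

/-- `k_𝔠` for a triple of sets `𝔠`. -/
def kTrip (ℓ m : Fin n → ℕ) (c : Trip n) : ℕ := kUVW ℓ m c.1 c.2.1 c.2.2

/-- `k_g` for `g ∈ E` (the valency of `R_g`). -/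
def kE (ℓ m : Fin n → ℕ) (g : Lbl n) : ℕ :=
  (∏ h ∈ lset g 1, (m h - 1)) * ∏ i ∈ lset g 2, (ℓ i - 1) * m i

/-- `k_{[g,h,i]}`. -/
def kBr (ℓ m : Fin n → ℕ) (g h i : Lbl n) : ℕ :=
  (∏ a ∈ lset h 1 \ (lset g 1 ∪ lset i 1), (m a - 1)) *
    ∏ a ∈ lset h 2 \ (lset g 2 ∪ lset i 2), (ℓ a - 1) * m a

/-- `𝔧 ∩ 𝔨` for triples of sets. -/
def interT (c d : Trip n) : Trip n := (c.1 ∩ d.1, c.2.1 ∩ d.2.1, c.2.2 ∩ d.2.2)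

/-- `𝔧 ∪ 𝔨` for triples of sets. -/
def unionT (c d : Trip n) : Trip n := (c.1 ∪ d.1, c.2.1 ∪ d.2.1, c.2.2 ∪ d.2.2)

/-- `𝔧 ∖ i` for a triple of sets `𝔧` and `i ∈ E`. -/
def sdiffT (c : Trip n) (i : Lbl n) : Trip n :=
  (c.1 \ lset i 1, c.2.1 \ lset i 2, c.2.2 \ lset i 2)

/-- `i ∩ 𝔧` for `i ∈ E` and a triple of sets `𝔧`. -/
def capT (i : Lbl n) (c : Trip n) : Trip n :=
  (lset i 1 ∩ c.1, lset i 2 ∩ c.2.1, lset i 2 ∩ c.2.2)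

/-- The triple `(g,h,i,𝔧,𝔨) ∈ U_{g,i}`. -/
def combT (ℓ m : Fin n → ℕ) (g h i : Lbl n) (j k : Trip n) : Trip n :=
  (circ m (lset g 1 ∩ lset i 1) \ lset h 1 ∪ lset g 1 ∩ lset i 1 ∩ (j.1 ∪ k.1),
   bullet ℓ (lset g 2 ∩ lset i 2) \ lset h 2 ∪ lset g 2 ∩ lset i 2 ∩ (j.2.1 ∪ k.2.1),
   (lset g 2 ∩ lset i 2) \ lset h 2 ∪ lset g 2 ∩ lset i 2 ∩ (j.2.2 ∪ k.2.2))

/-- The central elements `C_𝔥 = Σ_{i ∈ E} k_{𝔥∖i} • B_{i,i,i∩𝔥}`. -/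
noncomputable def Cmat (F : Type) [Field F] (ℓ m : Fin n → ℕ) (x : Pt ℓ m) (c : Trip n) :
    Matrix (Pt ℓ m) (Pt ℓ m) F :=
  ∑ i : Lbl n, (kTrip ℓ m (sdiffT c i) : F) • Bmat F ℓ m x i i (capT i c)

/-- Componentwise inclusion `⪯` of triples of sets. -/
def leT (c d : Trip n) : Prop := c.1 ⊆ d.1 ∧ c.2.1 ⊆ d.2.1 ∧ c.2.2 ⊆ d.2.2

/-- `|𝔠| = |S₁| + |S₂| + |S₃|`. -/
def cardT (c : Trip n) : ℕ := c.1.card + c.2.1.card + c.2.2.card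

/-- The triple `(g,h;𝔦)`. -/
def semiT (ℓ m : Fin n → ℕ) (g h : Lbl n) (c : Trip n) : Trip n :=
  (circ m (lset g 1 ∩ lset h 1), bullet ℓ c.2.2, lset g 2 ∩ lset h 2)

/-- The matrix `D_{g,h,𝔦}` (summing over all `𝔞 ∈ U_{g,h}` with `𝔦 ⪯ 𝔞 ⪯ (g,h;𝔦)` and `k_𝔞`
nonvanishing, with sign `(-1)^(|𝔞|-|𝔦|)`; this combines the double sum over
`j` and `𝔨 ∈ U_{g,h,𝔦,j}`). -/
noncomputable def Dmat (F : Type) [Field F] (ℓ m : Fin n → ℕ) (x : Pt ℓ m)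
    (g h : Lbl n) (c : Trip n) : Matrix (Pt ℓ m) (Pt ℓ m) F :=
  ∑ a ∈ Finset.univ.filter (fun a : Trip n =>
      MemU ℓ m g h a ∧ leT c a ∧ leT a (semiT ℓ m g h c) ∧ (kTrip ℓ m a : F) ≠ 0),
    ((-1 : F) ^ (cardT a - cardT c) * (kBr ℓ m g h g : F)⁻¹ * (kTrip ℓ m a : F)⁻¹) •
      Bmat F ℓ m x g h a

/-- Every product of `h` elements of `S` vanishes. -/
def ProdZero {α : Type} [Ring α] (S : Set α) (h : ℕ) : Prop :=
  ∀ f : Fin h → α, (∀ i, f i ∈ S) → (List.ofFn f).prod = 0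

/-- The corner `E*_g T E*_g` as a set of matrices. -/
def CornerSet (F : Type) [Field F] (ℓ m : Fin n → ℕ) (x : Pt ℓ m) (g : Lbl n) :
    Set (Matrix (Pt ℓ m) (Pt ℓ m) F) :=
  {N | ∃ M ∈ Talg F ℓ m x, N = Estar F ℓ m x g * M * Estar F ℓ m x g}

/-- The center `Z(T)` as a set of matrices. -/
def CenterSet (F : Type) [Field F] (ℓ m : Fin n → ℕ) (x : Pt ℓ m) :
    Set (Matrix (Pt ℓ m) (Pt ℓ m) F) :=
  {M | M ∈ Talg F ℓ m x ∧ ∀ N ∈ Talg F ℓ m x, M * N = N * M}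

/-- The Jacobson radical of `T`, defined (as in the paper, for a finite-dimensional
algebra) as the largest nilpotent two-sided ideal, i.e. the sup of all nilpotent
two-sided ideals of `T`. -/
noncomputable def RadT (F : Type) [Field F] (ℓ m : Fin n → ℕ) (x : Pt ℓ m) :
    Submodule F (Matrix (Pt ℓ m) (Pt ℓ m) F) :=
  sSup {J | (J : Set (Matrix (Pt ℓ m) (Pt ℓ m) F)) ⊆ (Talg F ℓ m x : Set _) ∧
    (∀ a ∈ J, ∀ t ∈ Talg F ℓ m x, a * t ∈ J ∧ t * a ∈ J) ∧
    ∃ h, ProdZero (J : Set (Matrix (Pt ℓ m) (Pt ℓ m) F)) h}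

/-- `(g, h, 𝔠) ∈ 𝔻`. -/
def MemD (F : Type) [Field F] (ℓ m : Fin n → ℕ) (t : Lbl n × Lbl n × Trip n) : Prop :=
  MemU ℓ m t.1 t.2.1 t.2.2 ∧
    ((kBr ℓ m t.1 t.2.1 t.1 * kBr ℓ m t.2.1 t.1 t.2.1 * kTrip ℓ m t.2.2 : ℕ) : F) ≠ 0

/-- The invariant classifying the equivalence `∼` on `𝔻`. -/
def keyD (ℓ m : Fin n → ℕ) (t : Lbl n × Lbl n × Trip n) : Trip n :=
  (circ m (lset t.1 1 ∩ lset t.2.1 1) \ t.2.2.1,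
   bullet ℓ (lset t.1 2 ∩ lset t.2.1 2) \ t.2.2.2.1,
   (lset t.1 2 ∩ lset t.2.1 2) \ t.2.2.2.2)

/-- The equivalence relation `∼` on `𝔻`. -/
def DSetoid (F : Type) [Field F] (ℓ m : Fin n → ℕ) : Setoid {t : Lbl n × Lbl n × Trip n // MemD F ℓ m t} :=
  ⟨fun s t => keyD ℓ m s.1 = keyD ℓ m t.1, ⟨fun _ => rfl, Eq.symm, Eq.trans⟩⟩

/-- The set of `∼`-equivalence classes of `𝔻`. -/
def ClassIdx (F : Type) [Field F] (ℓ m : Fin n → ℕ) : Type :=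
  Quotient (DSetoid F ℓ m)

/-- `|𝔻(c)|` for an equivalence class `c`. -/
noncomputable def dClass (F : Type) [Field F] (ℓ m : Fin n → ℕ) (c : ClassIdx F ℓ m) : ℕ :=
  Nat.card {a : Lbl n // ∃ (b : Trip n) (hb : MemD F ℓ m (a, a, b)),
    Quotient.mk (DSetoid F ℓ m) ⟨(a, a, b), hb⟩ = c}


lemma fin3_cases : ∀ j : Fin 3, j = 0 ∨ j = 1 ∨ j = 2 := by decide

lemma exists_perm_list {α : Type*} [DecidableEq α] :
    ∀ L : List (α × α), (∀ p ∈ L, ∀ q ∈ L, p.1 = q.1 ↔ p.2 = q.2) →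
    ∃ σ : Equiv.Perm α, ∀ p ∈ L, σ p.1 = p.2 := by
  intro L
  induction L with
  | nil => exact fun _ => ⟨1, by simp⟩
  | cons pq L ih =>
    intro hpat
    obtain ⟨σ, hσ⟩ := ih (fun p hp q hq => hpat p (by simp [hp]) q (by simp [hq]))
    by_cases hmem : ∃ q ∈ L, pq.1 = q.1
    · obtain ⟨q, hq, hq1⟩ := hmem
      have hq2 : pq.2 = q.2 := (hpat pq (by simp) q (by simp [hq])).mp hq1
      refine ⟨σ, ?_⟩
      intro p hp
      rcases List.mem_cons.mp hp with rfl | hp'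
      · rw [hq1, hq2, hσ q hq]
      · exact hσ p hp'
    · push_neg at hmem
      refine ⟨σ.trans (Equiv.swap (σ pq.1) pq.2), ?_⟩
      intro p hp
      rcases List.mem_cons.mp hp with rfl | hp'
      · simp [Equiv.swap_apply_left]
      · have h1 : σ p.1 = p.2 := hσ p hp'
        have h2 : p.2 ≠ σ pq.1 := by
          rw [← h1]; intro h; exact hmem p hp' (σ.injective h.symm)
        have h3 : p.2 ≠ pq.2 := by
          intro h
          exact hmem p hp' (((hpat pq (by simp) p (by simp [hp'])).mpr h.symm))
        simp [h1, Equiv.swap_apply_of_ne_of_ne h2 h3]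

lemma exists_perm_triple {α : Type*} [DecidableEq α] (p1 p2 p3 q1 q2 q3 : α)
    (h12 : p1 = p2 ↔ q1 = q2) (h13 : p1 = p3 ↔ q1 = q3) (h23 : p2 = p3 ↔ q2 = q3) :
    ∃ σ : Equiv.Perm α, σ p1 = q1 ∧ σ p2 = q2 ∧ σ p3 = q3 := by
  obtain ⟨σ, hσ⟩ := exists_perm_list [(p1,q1),(p2,q2),(p3,q3)] (by
    intro p hp q hq
    simp only [List.mem_cons, List.not_mem_nil, or_false] at hp hq
    rcases hp with rfl|rfl|rfl <;> rcases hq with rfl|rfl|rfl <;> simp_all [eq_comm])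
  exact ⟨σ, hσ (p1,q1) (by simp), hσ (p2,q2) (by simp), hσ (p3,q3) (by simp)⟩

def rtype {a b : ℕ} (u v : Fin a × Fin b) : Fin 3 :=
  if u = v then 0 else if u.1 = v.1 then 1 else 2

lemma rtype_eq_zero_iff {a b : ℕ} {u v : Fin a × Fin b} : rtype u v = 0 ↔ u = v := by
  unfold rtype; split_ifs with h1 h2 <;> simp_all

lemma rtype_eq_one_iff {a b : ℕ} {u v : Fin a × Fin b} : rtype u v = 1 ↔ u ≠ v ∧ u.1 = v.1 := by
  unfold rtype; split_ifs with h1 h2 <;> simp_all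

lemma rtype_eq_two_iff {a b : ℕ} {u v : Fin a × Fin b} : rtype u v = 2 ↔ u.1 ≠ v.1 := by
  unfold rtype; split_ifs with h1 h2 <;> simp_all [h1]

lemma rtype_symm {a b : ℕ} (u v : Fin a × Fin b) : rtype u v = rtype v u := by
  unfold rtype
  rcases eq_or_ne u v with rfl | h1
  · simp
  · rw [if_neg h1, if_neg (Ne.symm h1)]
    by_cases h2 : u.1 = v.1
    · rw [if_pos h2, if_pos h2.symm]
    · rw [if_neg h2, if_neg (fun h => h2 h.symm)]

lemma rtype_ne_two_iff {a b : ℕ} {u v : Fin a × Fin b} : rtype u v ≠ 2 ↔ u.1 = v.1 := by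
  rw [Ne, rtype_eq_two_iff, not_not]

lemma exists_auto {a b : ℕ} (x y z y' z' : Fin a × Fin b)
    (hy : rtype x y = rtype x y') (hz : rtype x z = rtype x z')
    (hyz : rtype y z = rtype y' z') :
    ∃ σ : Equiv.Perm (Fin a × Fin b),
      (∀ u v, rtype (σ u) (σ v) = rtype u v) ∧ σ x = x ∧ σ y = y' ∧ σ z = z' := by
  have exy : x = y ↔ x = y' := by rw [← rtype_eq_zero_iff (u := x) (v := y), hy, rtype_eq_zero_iff]
  have exz : x = z ↔ x = z' := by rw [← rtype_eq_zero_iff (u := x) (v := z), hz, rtype_eq_zero_iff]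
  have eyz : y = z ↔ y' = z' := by rw [← rtype_eq_zero_iff (u := y) (v := z), hyz, rtype_eq_zero_iff]
  have gxy : x.1 = y.1 ↔ x.1 = y'.1 := by
    rw [← rtype_ne_two_iff (u := x) (v := y), hy, rtype_ne_two_iff]
  have gxz : x.1 = z.1 ↔ x.1 = z'.1 := by
    rw [← rtype_ne_two_iff (u := x) (v := z), hz, rtype_ne_two_iff]
  have gyz : y.1 = z.1 ↔ y'.1 = z'.1 := by
    rw [← rtype_ne_two_iff (u := y) (v := z), hyz, rtype_ne_two_iff]
  obtain ⟨π, hπ1, hπ2, hπ3⟩ := exists_perm_triple x.1 y.1 z.1 x.1 y'.1 z'.1 gxy gxz gyz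
  have Exy : x.1 = y.1 → (x.2 = y.2 ↔ x.2 = y'.2) := by
    intro h
    constructor
    · intro h2; rw [show x = y' from exy.mp (Prod.ext h h2)]
    · intro h2; rw [show x = y from exy.mpr (Prod.ext (gxy.mp h) h2)]
  have Exz : x.1 = z.1 → (x.2 = z.2 ↔ x.2 = z'.2) := by
    intro h
    constructor
    · intro h2; rw [show x = z' from exz.mp (Prod.ext h h2)]
    · intro h2; rw [show x = z from exz.mpr (Prod.ext (gxz.mp h) h2)]
  have Eyz : y.1 = z.1 → (y.2 = z.2 ↔ y'.2 = z'.2) := by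
    intro h
    constructor
    · intro h2; rw [show y' = z' from eyz.mp (Prod.ext h h2)]
    · intro h2
      rw [show y = z from eyz.mpr (Prod.ext (gyz.mp h) h2)]
  have rfl2 : ∀ (c d : Fin b), (c = c ↔ d = d) := fun c d => by simp
  have hsec : ∀ c : Fin a, ∃ τ : Equiv.Perm (Fin b),
      (c = x.1 → τ x.2 = x.2) ∧ (c = y.1 → τ y.2 = y'.2) ∧ (c = z.1 → τ z.2 = z'.2) := by
    intro c
    by_cases hx : c = x.1 <;> by_cases hyc : c = y.1 <;> by_cases hzc : c = z.1
    · obtain ⟨τ, h1, h2, h3⟩ := exists_perm_triple x.2 y.2 z.2 x.2 y'.2 z'.2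
        (Exy (hx.symm.trans hyc)) (Exz (hx.symm.trans hzc)) (Eyz (hyc.symm.trans hzc))
      exact ⟨τ, fun _ => h1, fun _ => h2, fun _ => h3⟩
    · obtain ⟨τ, h1, h2, h3⟩ := exists_perm_triple x.2 y.2 y.2 x.2 y'.2 y'.2
        (Exy (hx.symm.trans hyc)) (Exy (hx.symm.trans hyc)) (rfl2 _ _)
      exact ⟨τ, fun _ => h1, fun _ => h2, fun h => absurd h hzc⟩
    · obtain ⟨τ, h1, h2, h3⟩ := exists_perm_triple x.2 z.2 z.2 x.2 z'.2 z'.2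
        (Exz (hx.symm.trans hzc)) (Exz (hx.symm.trans hzc)) (rfl2 _ _)
      exact ⟨τ, fun _ => h1, fun h => absurd h hyc, fun _ => h2⟩
    · obtain ⟨τ, h1, h2, h3⟩ := exists_perm_triple x.2 x.2 x.2 x.2 x.2 x.2
        (rfl2 _ _) (rfl2 _ _) (rfl2 _ _)
      exact ⟨τ, fun _ => h1, fun h => absurd h hyc, fun h => absurd h hzc⟩
    · obtain ⟨τ, h1, h2, h3⟩ := exists_perm_triple y.2 z.2 z.2 y'.2 z'.2 z'.2
        (Eyz (hyc.symm.trans hzc)) (Eyz (hyc.symm.trans hzc)) (rfl2 _ _)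
      exact ⟨τ, fun h => absurd h hx, fun _ => h1, fun _ => h2⟩
    · obtain ⟨τ, h1, h2, h3⟩ := exists_perm_triple y.2 y.2 y.2 y'.2 y'.2 y'.2
        (rfl2 _ _) (rfl2 _ _) (rfl2 _ _)
      exact ⟨τ, fun h => absurd h hx, fun _ => h1, fun h => absurd h hzc⟩
    · obtain ⟨τ, h1, h2, h3⟩ := exists_perm_triple z.2 z.2 z.2 z'.2 z'.2 z'.2
        (rfl2 _ _) (rfl2 _ _) (rfl2 _ _)
      exact ⟨τ, fun h => absurd h hx, fun h => absurd h hyc, fun _ => h1⟩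
    · exact ⟨1, fun h => absurd h hx, fun h => absurd h hyc, fun h => absurd h hzc⟩
  choose τ hτx hτy hτz using hsec
  refine ⟨Equiv.prodShear π τ, ?_, ?_, ?_, ?_⟩
  · intro u v
    unfold rtype
    have h1 : Equiv.prodShear π τ u = Equiv.prodShear π τ v ↔ u = v :=
      (Equiv.prodShear π τ).injective.eq_iff
    have h2 : (Equiv.prodShear π τ u).1 = (Equiv.prodShear π τ v).1 ↔ u.1 = v.1 := by
      simp [Equiv.prodShear]
    simp only [h1, h2]
  · have := hτx x.1 rfl
    simp [Equiv.prodShear, hπ1, this]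
  · have := hτy y.1 rfl
    simp [Equiv.prodShear, hπ2, this]
  · have := hτz z.1 rfl
    simp [Equiv.prodShear, hπ3, this]


open Fin.NatCast in
lemma fin_add_ne {l : ℕ} [NeZero l] (c : Fin l) (k : ℕ) (hk : 0 < k) (hkl : k < l) :
    c + (k : Fin l) ≠ c := by
  intro h
  apply_fun Fin.val at h
  rw [Fin.add_def, Fin.val_natCast, Nat.mod_eq_of_lt hkl] at h
  have h' : (c.val + k) % l = c.val := h
  rcases Nat.lt_or_ge (c.val + k) l with hlt | hge
  · rw [Nat.mod_eq_of_lt hlt] at h'; omega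
  · have h2 : (c.val + k) % l = c.val + k - l := by
      rw [Nat.mod_eq_sub_mod hge, Nat.mod_eq_of_lt (by omega)]
    have := c.isLt
    omega

open Fin.NatCast in
lemma fin_one_ne_two {l : ℕ} [NeZero l] (hl : 2 < l) (c : Fin l) : c + (1 : ℕ) ≠ c + (2 : ℕ) := by
  intro h
  have h2 : ((1 : ℕ) : Fin l) = ((2 : ℕ) : Fin l) := add_left_cancel h
  apply_fun Fin.val at h2
  rw [Fin.val_natCast, Fin.val_natCast, Nat.mod_eq_of_lt (show (1:ℕ) < l by omega),
    Nat.mod_eq_of_lt (show (2:ℕ) < l by omega)] at h2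
  omega

def feas (l m : ℕ) (g h a : Fin 3) : Prop :=
  if g = 0 then a = h
  else if h = 0 then a = g
  else if g = 1 ∧ h = 1 then a = 0 ∨ (a = 1 ∧ 2 < m)
  else if g = 2 ∧ h = 2 then a = 0 ∨ a = 1 ∨ (a = 2 ∧ 2 < l)
  else a = 2

lemma feas_exists_forward {l m : ℕ} (x0 : Fin l × Fin m) (g h a : Fin 3)
    (H : ∃ u v : Fin l × Fin m, rtype x0 u = g ∧ rtype u v = a ∧ rtype x0 v = h) :
    feas l m g h a := by
  obtain ⟨u, v, hu, huv, hv⟩ := H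
  rcases fin3_cases g with rfl|rfl|rfl <;> rcases fin3_cases h with rfl|rfl|rfl <;>
    rcases fin3_cases a with rfl|rfl|rfl <;>
    simp only [rtype_eq_zero_iff, rtype_eq_one_iff, rtype_eq_two_iff] at hu huv hv <;>
    simp_all [feas]
  · -- (1,1,1): three distinct points in one group
    by_contra hm
    push_neg at hm
    have h1 : u.1 = v.1 := huv.2
    have h2 : x0.1 = v.1 := hv.2
    have e1 : u.2 ≠ v.2 := fun e => huv.1 (Prod.ext h1 e)
    have e2 : x0.2 ≠ v.2 := fun e => hv.1 (Prod.ext h2 e)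
    have e3 : x0.2 ≠ u.2 := fun e => hu (Prod.ext (h2.trans h1.symm) e)
    have d1 : u.2.val ≠ v.2.val := fun e => e1 (Fin.ext e)
    have d2 : x0.2.val ≠ v.2.val := fun e => e2 (Fin.ext e)
    have d3 : x0.2.val ≠ u.2.val := fun e => e3 (Fin.ext e)
    have := x0.2.isLt; have := u.2.isLt; have := v.2.isLt
    omega
  · -- (2,2,2): three distinct groups
    by_contra hlv
    push_neg at hlv
    have d1 : u.1.val ≠ v.1.val := fun e => huv (Fin.ext e)
    have d2 : x0.1.val ≠ v.1.val := fun e => hv (Fin.ext e)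
    have d3 : x0.1.val ≠ u.1.val := fun e => hu (Fin.ext e)
    have := x0.1.isLt; have := u.1.isLt; have := v.1.isLt
    omega




open Fin.NatCast in
lemma feas_exists_backward {l m : ℕ} (hl : 2 ≤ l) (hm : 2 ≤ m) (x0 : Fin l × Fin m)
    (g h a : Fin 3) (hf : feas l m g h a) :
    ∃ u v : Fin l × Fin m, rtype x0 u = g ∧ rtype u v = a ∧ rtype x0 v = h := by
  haveI : NeZero l := ⟨by omega⟩
  haveI : NeZero m := ⟨by omega⟩
  have r0 : ∀ (u : Fin l × Fin m), rtype u u = 0 := fun u => rtype_eq_zero_iff.mpr rfl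
  set p1 : Fin l × Fin m := (x0.1, x0.2 + ((1:ℕ) : Fin m)) with hp1def
  set q1 : Fin l × Fin m := (x0.1 + ((1:ℕ) : Fin l), x0.2) with hq1def
  set q1' : Fin l × Fin m := (x0.1 + ((1:ℕ) : Fin l), x0.2 + ((1:ℕ) : Fin m)) with hq1'def
  have bm1 : x0.2 + ((1:ℕ) : Fin m) ≠ x0.2 := fin_add_ne x0.2 1 one_pos (by omega)
  have al1 : x0.1 + ((1:ℕ) : Fin l) ≠ x0.1 := fin_add_ne x0.1 1 one_pos (by omega)
  have r2 : rtype x0 p1 = 1 := rtype_eq_one_iff.mpr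
    ⟨fun e => bm1 (congrArg Prod.snd e).symm, rfl⟩
  have r3 : rtype x0 q1 = 2 := rtype_eq_two_iff.mpr (fun e => al1 e.symm)
  have r4 : rtype x0 q1' = 2 := rtype_eq_two_iff.mpr (fun e => al1 e.symm)
  have r5 : rtype p1 q1 = 2 := rtype_eq_two_iff.mpr (fun e => al1 e.symm)
  have r6 : rtype q1 q1' = 1 := rtype_eq_one_iff.mpr
    ⟨fun e => bm1 (congrArg Prod.snd e).symm, rfl⟩
  rcases fin3_cases g with rfl|rfl|rfl <;> rcases fin3_cases h with rfl|rfl|rfl <;>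
    rcases fin3_cases a with rfl|rfl|rfl
  · exact ⟨x0, x0, r0 x0, r0 x0, r0 x0⟩
  · exact absurd hf (by simp [feas])
  · exact absurd hf (by simp [feas])
  · exact absurd hf (by simp [feas])
  · exact ⟨x0, p1, r0 x0, r2, r2⟩
  · exact absurd hf (by simp [feas])
  · exact absurd hf (by simp [feas])
  · exact absurd hf (by simp [feas])
  · exact ⟨x0, q1, r0 x0, r3, r3⟩
  · exact absurd hf (by simp [feas])
  · exact ⟨p1, x0, r2, (rtype_symm p1 x0).trans r2, r0 x0⟩
  · exact absurd hf (by simp [feas])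
  · exact ⟨p1, p1, r2, r0 p1, r2⟩
  · -- (1,1,1), needs 2 < m
    simp only [feas] at hf
    have hm2 : 2 < m := by simpa using hf
    set p2 : Fin l × Fin m := (x0.1, x0.2 + ((2:ℕ) : Fin m)) with hp2def
    have bm2 : x0.2 + ((2:ℕ) : Fin m) ≠ x0.2 := fin_add_ne x0.2 2 (by omega) (by omega)
    have b12 : x0.2 + ((1:ℕ) : Fin m) ≠ x0.2 + ((2:ℕ) : Fin m) := fin_one_ne_two hm2 x0.2
    have r7 : rtype x0 p2 = 1 := rtype_eq_one_iff.mpr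
      ⟨fun e => bm2 (congrArg Prod.snd e).symm, rfl⟩
    have r8 : rtype p1 p2 = 1 := rtype_eq_one_iff.mpr
      ⟨fun e => b12 (congrArg Prod.snd e), rfl⟩
    exact ⟨p1, p2, r2, r8, r7⟩
  · exact absurd hf (by simp [feas])
  · exact absurd hf (by simp [feas])
  · exact absurd hf (by simp [feas])
  · exact ⟨p1, q1, r2, r5, r3⟩
  · exact absurd hf (by simp [feas])
  · exact absurd hf (by simp [feas])
  · exact ⟨q1, x0, r3, (rtype_symm q1 x0).trans r3, r0 x0⟩
  · exact absurd hf (by simp [feas])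
  · exact absurd hf (by simp [feas])
  · exact ⟨q1, p1, r3, (rtype_symm q1 p1).trans r5, r2⟩
  · exact ⟨q1, q1, r3, r0 q1, r3⟩
  · exact ⟨q1, q1', r3, r6, r4⟩
  · -- (2,2,2), needs 2 < l
    simp only [feas] at hf
    have hl2 : 2 < l := by simpa using hf
    set q2 : Fin l × Fin m := (x0.1 + ((2:ℕ) : Fin l), x0.2) with hq2def
    have al2 : x0.1 + ((2:ℕ) : Fin l) ≠ x0.1 := fin_add_ne x0.1 2 (by omega) (by omega)
    have a12 : x0.1 + ((1:ℕ) : Fin l) ≠ x0.1 + ((2:ℕ) : Fin l) := fin_one_ne_two hl2 x0.1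
    have r9 : rtype x0 q2 = 2 := rtype_eq_two_iff.mpr (fun e => al2 e.symm)
    have r10 : rtype q1 q2 = 2 := rtype_eq_two_iff.mpr (fun e => a12 e)
    exact ⟨q1, q2, r3, r10, r9⟩

lemma feas_iff_local (l m : ℕ) (g h a : Fin 3) :
    feas l m g h a ↔
      (((g = 0 ∧ h = 1) ∨ (g = 1 ∧ h = 0)) → a = 1) ∧
      (a = 1 → ((g = 0 ∧ h = 1) ∨ (g = 1 ∧ h = 0) ∨ (g = 1 ∧ h = 1 ∧ 2 < m) ∨ (g = 2 ∧ h = 2))) ∧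
      (((g = 2 ∧ ¬h = 2) ∨ (h = 2 ∧ ¬g = 2)) → a = 2) ∧
      (a = 2 → ((g = 2 ∧ ¬h = 2) ∨ (h = 2 ∧ ¬g = 2) ∨ (g = 2 ∧ h = 2 ∧ 2 < l))) := by
  rcases fin3_cases g with rfl|rfl|rfl <;> rcases fin3_cases h with rfl|rfl|rfl <;>
    rcases fin3_cases a with rfl|rfl|rfl <;> simp [feas]

lemma memP_iff {n : ℕ} (ℓ m : Fin n → ℕ) (g h a : Lbl n) :
    MemP ℓ m g h a ↔ ∀ i, feas (ℓ i) (m i) (g i) (h i) (a i) := by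
  unfold MemP lset circ bullet
  simp only [Finset.subset_iff, Finset.mem_union, Finset.mem_inter, Finset.mem_sdiff,
    Finset.mem_filter, Finset.mem_univ, true_and]
  constructor
  · rintro ⟨c1, c2, c3, c4⟩ i
    rw [feas_iff_local]
    refine ⟨fun H => c1 (by tauto), fun H => by have := c2 H; tauto,
      fun H => c3 (by tauto), fun H => by have := c4 H; tauto⟩
  · intro H
    refine ⟨fun i hi => ?_, fun i hi => ?_, fun i hi => ?_, fun i hi => ?_⟩
    · exact ((feas_iff_local _ _ _ _ _).mp (H i)).1 (by tauto)
    · have := ((feas_iff_local _ _ _ _ _).mp (H i)).2.1 hi; tauto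
    · exact ((feas_iff_local _ _ _ _ _).mp (H i)).2.2.1 (by tauto)
    · have := ((feas_iff_local _ _ _ _ _).mp (H i)).2.2.2 hi; tauto


lemma rel1_iff {a b : ℕ} (j : Fin 3) (u v : Fin a × Fin b) :
    rel1 j u v ↔ rtype u v = j := by
  rcases fin3_cases j with rfl | rfl | rfl <;>
    simp [rel1, rtype_eq_zero_iff, rtype_eq_one_iff, rtype_eq_two_iff]

/-- the relation type of a pair of points -/
def rT (ℓ m : Fin n → ℕ) (y z : Pt ℓ m) : Lbl n := fun i => rtype (y i) (z i)

lemma Rel_iff {ℓ m : Fin n → ℕ} {g : Lbl n} {y z : Pt ℓ m} :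
    Rel ℓ m g y z ↔ rT ℓ m y z = g := by
  unfold Rel rT
  rw [funext_iff]
  exact forall_congr' fun i => rel1_iff (g i) (y i) (z i)

lemma rT_self {ℓ m : Fin n → ℕ} (y : Pt ℓ m) : rT ℓ m y y = 0 := by
  funext i; exact rtype_eq_zero_iff.mpr rfl

lemma rT_eq_zero_iff {ℓ m : Fin n → ℕ} {y z : Pt ℓ m} : rT ℓ m y z = 0 ↔ y = z := by
  constructor
  · intro h; funext i
    exact rtype_eq_zero_iff.mp (congrFun h i)
  · rintro rfl; exact rT_self y

/-- the basic sandwich matrices -/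
noncomputable def Mmat (F : Type) [Field F] (ℓ m : Fin n → ℕ) (x : Pt ℓ m)
    (g h a : Lbl n) : Matrix (Pt ℓ m) (Pt ℓ m) F :=
  Estar F ℓ m x g * Amat F ℓ m a * Estar F ℓ m x h

lemma Mmat_apply (F : Type) [Field F] (ℓ m : Fin n → ℕ) (x : Pt ℓ m)
    (g h a : Lbl n) (y z : Pt ℓ m) :
    Mmat F ℓ m x g h a y z =
      if rT ℓ m x y = g ∧ rT ℓ m y z = a ∧ rT ℓ m x z = h then 1 else 0 := by
  unfold Mmat Estar
  rw [Matrix.mul_diagonal, Matrix.diagonal_mul]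
  simp only [Amat, Rel_iff]
  split_ifs <;> simp_all

variable (F : Type) [Field F] (ℓ m : Fin n → ℕ) (x : Pt ℓ m)

/-- the span of the sandwich matrices -/
noncomputable def MSpan : Submodule F (Matrix (Pt ℓ m) (Pt ℓ m) F) :=
  Submodule.span F {M | ∃ g h a : Lbl n, M = Mmat F ℓ m x g h a}

lemma Mmat_mem_MSpan (g h a : Lbl n) : Mmat F ℓ m x g h a ∈ MSpan F ℓ m x :=
  Submodule.subset_span ⟨g, h, a, rfl⟩

lemma one_eq_sum_Mmat : (1 : Matrix (Pt ℓ m) (Pt ℓ m) F) = ∑ g : Lbl n, Mmat F ℓ m x g g 0 := by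
  ext y z
  rw [Matrix.sum_apply]
  simp only [Mmat_apply]
  by_cases hyz : y = z
  · subst hyz
    simp [rT_self, Matrix.one_apply, Finset.sum_ite_eq]
  · have : rT ℓ m y z ≠ 0 := fun h => hyz (rT_eq_zero_iff.mp h)
    simp [Matrix.one_apply_ne hyz, this]

lemma sum_sum_boole (c1 c2 : Lbl n) :
    (∑ g : Lbl n, ∑ h : Lbl n, if c1 = g ∧ c2 = h then (1:F) else 0) = 1 := by
  have step : ∀ g : Lbl n, (∑ h : Lbl n, if c1 = g ∧ c2 = h then (1:F) else 0)
      = if c1 = g then 1 else 0 := by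
    intro g; by_cases h1 : c1 = g <;> simp [h1, Finset.sum_ite_eq]
  rw [Finset.sum_congr rfl fun g _ => step g]
  simp [Finset.sum_ite_eq]

lemma Amat_eq_sum_Mmat (a : Lbl n) :
    Amat F ℓ m a = ∑ p : Lbl n × Lbl n, Mmat F ℓ m x p.1 p.2 a := by
  ext y z
  rw [Matrix.sum_apply, Fintype.sum_prod_type]
  simp only [Mmat_apply]
  by_cases ha : rT ℓ m y z = a
  · have : ∀ g h : Lbl n,
        (if rT ℓ m x y = g ∧ rT ℓ m y z = a ∧ rT ℓ m x z = h then (1:F) else 0) =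
        (if rT ℓ m x y = g ∧ rT ℓ m x z = h then (1:F) else 0) := by
      intro g h; split_ifs <;> simp_all
    rw [Finset.sum_congr rfl fun g _ => Finset.sum_congr rfl fun h _ => this g h]
    rw [sum_sum_boole]
    simp [Amat, Rel_iff, ha]
  · have : ∀ g h : Lbl n,
        (if rT ℓ m x y = g ∧ rT ℓ m y z = a ∧ rT ℓ m x z = h then (1:F) else 0) = 0 := by
      intro g h; split_ifs <;> simp_all
    rw [Finset.sum_congr rfl fun g _ => Finset.sum_congr rfl fun h _ => this g h]
    simp [Amat, Rel_iff, ha]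

lemma Estar_eq_Mmat (g : Lbl n) : Estar F ℓ m x g = Mmat F ℓ m x g g 0 := by
  ext y z
  rw [Mmat_apply]
  unfold Estar
  rw [Matrix.diagonal_apply]
  by_cases hyz : y = z
  · subst hyz
    simp [Rel_iff, rT_self]
  · have : rT ℓ m y z ≠ 0 := fun h => hyz (rT_eq_zero_iff.mp h)
    simp [hyz, this]

/-- structure constants -/
noncomputable def cF (g h k a b e : Lbl n) : F :=
  if H : ∃ y z : Pt ℓ m, rT ℓ m x y = g ∧ rT ℓ m x z = k ∧ rT ℓ m y z = e then
    (Nat.card {w : Pt ℓ m // rT ℓ m x w = h ∧ rT ℓ m H.choose w = a ∧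
        rT ℓ m w H.choose_spec.choose = b} : F)
  else 0

lemma card_hom (y z y' z' : Pt ℓ m)
    (hy : rT ℓ m x y = rT ℓ m x y') (hz : rT ℓ m x z = rT ℓ m x z')
    (hyz : rT ℓ m y z = rT ℓ m y' z') (h a b : Lbl n) :
    Nat.card {w : Pt ℓ m // rT ℓ m x w = h ∧ rT ℓ m y w = a ∧ rT ℓ m w z = b} =
    Nat.card {w : Pt ℓ m // rT ℓ m x w = h ∧ rT ℓ m y' w = a ∧ rT ℓ m w z' = b} := by
  choose σ pres fx fy fz using fun i =>
    exists_auto (x i) (y i) (z i) (y' i) (z' i)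
      (congrFun hy i) (congrFun hz i) (congrFun hyz i)
  refine Nat.card_congr (Equiv.subtypeEquiv (Equiv.piCongrRight σ) fun w => ?_)
  have E1 : rT ℓ m x ((Equiv.piCongrRight σ) w) = rT ℓ m x w := by
    funext i
    show rtype (x i) (σ i (w i)) = rtype (x i) (w i)
    conv_lhs => rw [← fx i]
    rw [pres i]
  have E2 : rT ℓ m y' ((Equiv.piCongrRight σ) w) = rT ℓ m y w := by
    funext i
    show rtype (y' i) (σ i (w i)) = rtype (y i) (w i)
    rw [← fy i, pres i]
  have E3 : rT ℓ m ((Equiv.piCongrRight σ) w) z' = rT ℓ m w z := by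
    funext i
    show rtype (σ i (w i)) (z' i) = rtype (w i) (z i)
    rw [← fz i, pres i]
  rw [E1, E2, E3]

lemma Mmat_mul_same (g h k a b : Lbl n) :
    Mmat F ℓ m x g h a * Mmat F ℓ m x h k b =
      ∑ e : Lbl n, cF F ℓ m x g h k a b e • Mmat F ℓ m x g k e := by
  ext y z
  rw [Matrix.mul_apply, Matrix.sum_apply]
  simp only [Matrix.smul_apply, Mmat_apply, smul_eq_mul]
  by_cases hg : rT ℓ m x y = g
  · by_cases hk : rT ℓ m x z = k
    · have lhs_eq : ∀ w : Pt ℓ m,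
          (if rT ℓ m x y = g ∧ rT ℓ m y w = a ∧ rT ℓ m x w = h then (1:F) else 0) *
          (if rT ℓ m x w = h ∧ rT ℓ m w z = b ∧ rT ℓ m x z = k then (1:F) else 0) =
          (if rT ℓ m x w = h ∧ rT ℓ m y w = a ∧ rT ℓ m w z = b then (1:F) else 0) := by
        intro w
        split_ifs <;> simp_all
      rw [Finset.sum_congr rfl fun w _ => lhs_eq w]
      rw [Finset.sum_boole]
      have rhs_eq : ∀ e : Lbl n,
          cF F ℓ m x g h k a b e *
            (if rT ℓ m x y = g ∧ rT ℓ m y z = e ∧ rT ℓ m x z = k then (1:F) else 0) =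
          (if rT ℓ m y z = e then cF F ℓ m x g h k a b e else 0) := by
        intro e
        split_ifs <;> simp_all
      rw [Finset.sum_congr rfl fun e _ => rhs_eq e, Finset.sum_ite_eq]
      simp only [Finset.mem_univ, if_true]
      unfold cF
      have Hp : ∃ y' z' : Pt ℓ m, rT ℓ m x y' = g ∧ rT ℓ m x z' = k ∧
          rT ℓ m y' z' = rT ℓ m y z := ⟨y, z, hg, hk, rfl⟩
      rw [dif_pos Hp]
      obtain ⟨h1, h2, h3⟩ := Hp.choose_spec.choose_spec
      rw [card_hom ℓ m x Hp.choose Hp.choose_spec.choose y z (h1.trans hg.symm)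
          (h2.trans hk.symm) h3 h a b]
      rw [Nat.card_eq_fintype_card, Fintype.card_subtype]
    · have : ∀ e : Lbl n, cF F ℓ m x g h k a b e *
          (if rT ℓ m x y = g ∧ rT ℓ m y z = e ∧ rT ℓ m x z = k then (1:F) else 0) = 0 := by
        intro e; split_ifs <;> simp_all
      rw [Finset.sum_congr rfl fun e _ => this e]
      rw [Finset.sum_const, smul_zero]
      apply Finset.sum_eq_zero
      intro w _
      split_ifs <;> simp_all
  · have : ∀ e : Lbl n, cF F ℓ m x g h k a b e *
        (if rT ℓ m x y = g ∧ rT ℓ m y z = e ∧ rT ℓ m x z = k then (1:F) else 0) = 0 := by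
      intro e; split_ifs <;> simp_all
    rw [Finset.sum_congr rfl fun e _ => this e]
    rw [Finset.sum_const, smul_zero]
    apply Finset.sum_eq_zero
    intro w _
    split_ifs <;> simp_all

lemma Mmat_mul_ne (g h h' k a b : Lbl n) (hne : h ≠ h') :
    Mmat F ℓ m x g h a * Mmat F ℓ m x h' k b = 0 := by
  ext y z
  rw [Matrix.mul_apply]
  simp only [Matrix.zero_apply]
  apply Finset.sum_eq_zero
  intro w _
  rw [Mmat_apply, Mmat_apply]
  split_ifs with h1 h2 <;> simp_all

lemma MSpan_mul_mem {A B : Matrix (Pt ℓ m) (Pt ℓ m) F}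
    (hA : A ∈ MSpan F ℓ m x) (hB : B ∈ MSpan F ℓ m x) : A * B ∈ MSpan F ℓ m x := by
  induction hA using Submodule.span_induction with
  | mem A hA =>
    induction hB using Submodule.span_induction with
    | mem B hB =>
      obtain ⟨g, h, a, rfl⟩ := hA
      obtain ⟨g', k, b, rfl⟩ := hB
      by_cases hh : h = g'
      · subst hh
        rw [Mmat_mul_same]
        exact Submodule.sum_mem _ fun e _ =>
          Submodule.smul_mem _ _ (Mmat_mem_MSpan F ℓ m x g k e)
      · rw [Mmat_mul_ne F ℓ m x g h g' k a b hh]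
        exact Submodule.zero_mem _
    | zero => rw [mul_zero]; exact Submodule.zero_mem _
    | add B C _ _ hB hC => rw [mul_add]; exact Submodule.add_mem _ hB hC
    | smul c B _ hB => rw [mul_smul_comm]; exact Submodule.smul_mem _ _ hB
  | zero => rw [zero_mul]; exact Submodule.zero_mem _
  | add A C _ _ hA hC => rw [add_mul]; exact Submodule.add_mem _ hA hC
  | smul c A _ hA => rw [smul_mul_assoc]; exact Submodule.smul_mem _ _ hA

lemma Talg_toSubmodule_eq :
    Subalgebra.toSubmodule (Talg F ℓ m x) = MSpan F ℓ m x := by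
  apply le_antisymm
  · have h1 : (1 : Matrix (Pt ℓ m) (Pt ℓ m) F) ∈ MSpan F ℓ m x := by
      rw [one_eq_sum_Mmat F ℓ m x]
      exact Submodule.sum_mem _ fun g _ => Mmat_mem_MSpan F ℓ m x g g 0
    have halg : Talg F ℓ m x ≤ (MSpan F ℓ m x).toSubalgebra h1
        (fun A B hA hB => MSpan_mul_mem F ℓ m x hA hB) := by
      rw [Talg, Algebra.adjoin_le_iff]
      rintro M (⟨a, rfl⟩ | ⟨g, rfl⟩)
      · show Amat F ℓ m a ∈ MSpan F ℓ m x
        rw [Amat_eq_sum_Mmat F ℓ m x a]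
        exact Submodule.sum_mem _ fun p _ => Mmat_mem_MSpan F ℓ m x p.1 p.2 a
      · show Estar F ℓ m x g ∈ MSpan F ℓ m x
        rw [Estar_eq_Mmat F ℓ m x g]
        exact Mmat_mem_MSpan F ℓ m x g g 0
    intro M hM
    exact halg hM
  · rw [MSpan, Submodule.span_le]
    rintro M ⟨g, h, a, rfl⟩
    show Mmat F ℓ m x g h a ∈ Talg F ℓ m x
    have hA : Amat F ℓ m a ∈ Talg F ℓ m x :=
      Algebra.subset_adjoin (Set.mem_union_left _ ⟨a, rfl⟩)
    have hE : ∀ g', Estar F ℓ m x g' ∈ Talg F ℓ m x := fun g' =>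
      Algebra.subset_adjoin (Set.mem_union_right _ ⟨g', rfl⟩)
    exact mul_mem (mul_mem (hE g) hA) (hE h)



/-! ### Keys and distinguished labels -/

def keyF (ℓ m : Fin n → ℕ) (g h a : Lbl n) : Trip n :=
  (lset a 1 ∩ circ m (lset g 1 ∩ lset h 1),
   lset a 2 ∩ bullet ℓ (lset g 2 ∩ lset h 2),
   lset a 1 ∩ (lset g 2 ∩ lset h 2))

lemma memUc_iff (ℓ m : Fin n → ℕ) (g h : Lbl n) (c : Trip n) (a : Lbl n) :
    MemUc ℓ m g h c a ↔ MemP ℓ m g h a ∧ leT (keyF ℓ m g h a) c := by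
  unfold MemUc leT keyF
  tauto

lemma mem_keyF1 {ℓ m : Fin n → ℕ} {g h a : Lbl n} {i : Fin n} :
    i ∈ (keyF ℓ m g h a).1 ↔ a i = 1 ∧ g i = 1 ∧ h i = 1 ∧ 2 < m i := by
  simp only [keyF, lset, circ, Finset.mem_inter, Finset.mem_filter, Finset.mem_univ, true_and]
  tauto

lemma mem_keyF2 {ℓ m : Fin n → ℕ} {g h a : Lbl n} {i : Fin n} :
    i ∈ (keyF ℓ m g h a).2.1 ↔ a i = 2 ∧ g i = 2 ∧ h i = 2 ∧ 2 < ℓ i := by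
  simp only [keyF, lset, bullet, Finset.mem_inter, Finset.mem_filter, Finset.mem_univ, true_and]
  tauto

lemma mem_keyF3 {ℓ m : Fin n → ℕ} {g h a : Lbl n} {i : Fin n} :
    i ∈ (keyF ℓ m g h a).2.2 ↔ a i = 1 ∧ g i = 2 ∧ h i = 2 := by
  simp only [keyF, lset, Finset.mem_inter, Finset.mem_filter, Finset.mem_univ, true_and]

lemma keyF_disjoint (ℓ m : Fin n → ℕ) (g h a : Lbl n) :
    Disjoint (keyF ℓ m g h a).2.1 (keyF ℓ m g h a).2.2 := by
  rw [Finset.disjoint_left]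
  intro i h1 h2
  rw [mem_keyF2] at h1
  rw [mem_keyF3] at h2
  rw [h1.1] at h2
  exact absurd h2.1 (by decide)

lemma memP_key_inj {ℓ m : Fin n → ℕ} {g h a a' : Lbl n}
    (ha : MemP ℓ m g h a) (ha' : MemP ℓ m g h a')
    (hk : keyF ℓ m g h a = keyF ℓ m g h a') : a = a' := by
  rw [memP_iff] at ha ha'
  funext i
  have f := ha i
  have f' := ha' i
  clear ha ha' 
  have e1 : (i ∈ (keyF ℓ m g h a).1) ↔ (i ∈ (keyF ℓ m g h a').1) := by rw [hk]
  have e2 : (i ∈ (keyF ℓ m g h a).2.1) ↔ (i ∈ (keyF ℓ m g h a').2.1) := by rw [hk]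
  have e3 : (i ∈ (keyF ℓ m g h a).2.2) ↔ (i ∈ (keyF ℓ m g h a').2.2) := by rw [hk]
  rw [mem_keyF1, mem_keyF1] at e1
  rw [mem_keyF2, mem_keyF2] at e2
  rw [mem_keyF3, mem_keyF3] at e3
  clear hk
  rcases fin3_cases (g i) with hg|hg|hg <;> rcases fin3_cases (h i) with hh|hh|hh <;>
    rcases fin3_cases (a i) with ha1|ha1|ha1 <;> rcases fin3_cases (a' i) with ha2|ha2|ha2 <;>
    rw [ha1, ha2] <;> simp_all [feas]

/-- the distinguished label `a_𝔠` -/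
def aC (g h : Lbl n) (c : Trip n) : Lbl n := fun i =>
  if (g i = 0 ∧ h i = 1) ∨ (g i = 1 ∧ h i = 0) ∨ i ∈ c.1 ∨ (i ∈ c.2.2 ∧ i ∉ c.2.1) then 1
  else if (g i = 2 ∧ ¬ h i = 2) ∨ (h i = 2 ∧ ¬ g i = 2) ∨ i ∈ c.2.1 then 2
  else 0

lemma memU_iff (ℓ m : Fin n → ℕ) (g h : Lbl n) (c : Trip n) :
    MemU ℓ m g h c ↔
      (∀ i ∈ c.1, g i = 1 ∧ h i = 1 ∧ 2 < m i) ∧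
      (∀ i ∈ c.2.1, g i = 2 ∧ h i = 2 ∧ 2 < ℓ i) ∧
      c.2.1 ⊆ c.2.2 ∧ (∀ i ∈ c.2.2, g i = 2 ∧ h i = 2) := by
  unfold MemU circ bullet lset
  simp only [Finset.subset_iff, Finset.mem_inter, Finset.mem_filter, Finset.mem_univ, true_and]
  constructor
  · rintro ⟨u1, u2, u3, u4⟩
    exact ⟨fun i hi => ⟨(u1 hi).1.1, (u1 hi).1.2, (u1 hi).2⟩,
           fun i hi => ⟨(u2 hi).1.1, (u2 hi).1.2, (u2 hi).2⟩,
           (fun _ hi => u3 hi),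
           fun i hi => u4 hi⟩
  · rintro ⟨u1, u2, u3, u4⟩
    exact ⟨fun i hi => ⟨⟨(u1 i hi).1, (u1 i hi).2.1⟩, (u1 i hi).2.2⟩,
           fun i hi => ⟨⟨(u2 i hi).1, (u2 i hi).2.1⟩, (u2 i hi).2.2⟩,
           (fun _ hi => u3 hi),
           fun i hi => u4 i hi⟩

lemma aC_memP {ℓ m : Fin n → ℕ} {g h : Lbl n} {c : Trip n} (hc : MemU ℓ m g h c) :
    MemP ℓ m g h (aC g h c) := by
  rw [memU_iff] at hc
  obtain ⟨u1, u2, u3, u4⟩ := hc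
  rw [memP_iff]
  intro i
  rw [feas_iff_local]
  unfold aC
  split_ifs with h1 h2
  · refine ⟨fun _ => rfl, fun _ => ?_, fun H => ?_, fun H => absurd H (by decide)⟩
    · rcases h1 with h1 | h1 | h1 | h1
      · tauto
      · tauto
      · have := u1 i h1; tauto
      · have := u4 i h1.1; tauto
    · exfalso
      rcases h1 with h1 | h1 | h1 | h1
      · rcases H with H | H
        · rw [h1.1] at H; exact absurd H.1 (by decide)
        · rw [h1.2] at H; exact absurd H.1 (by decide)
      · rcases H with H | H
        · rw [h1.1] at H; exact absurd H.1 (by decide)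
        · rw [h1.2] at H; exact absurd H.1 (by decide)
      · have := u1 i h1
        rcases H with H | H
        · rw [this.1] at H; exact absurd H.1 (by decide)
        · rw [this.2.1] at H; exact absurd H.1 (by decide)
      · have := u4 i h1.1
        rcases H with H | H
        · exact H.2 this.2
        · exact H.2 this.1
  · refine ⟨fun H => ?_, fun H => absurd H (by decide), fun _ => rfl, fun _ => ?_⟩
    · exact absurd (by tauto : (g i = 0 ∧ h i = 1) ∨ (g i = 1 ∧ h i = 0) ∨ i ∈ c.1 ∨ (i ∈ c.2.2 ∧ i ∉ c.2.1)) h1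
    · rcases h2 with h2 | h2 | h2
      · tauto
      · tauto
      · have := u2 i h2; tauto
  · refine ⟨fun H => ?_, fun H => absurd H (by decide), fun H => ?_, fun H => absurd H (by decide)⟩
    · exact absurd (by tauto : (g i = 0 ∧ h i = 1) ∨ (g i = 1 ∧ h i = 0) ∨ i ∈ c.1 ∨ (i ∈ c.2.2 ∧ i ∉ c.2.1)) h1
    · exact absurd (by tauto : (g i = 2 ∧ ¬ h i = 2) ∨ (h i = 2 ∧ ¬ g i = 2) ∨ i ∈ c.2.1) h2


lemma keyF_aC {ℓ m : Fin n → ℕ} {g h : Lbl n} {c : Trip n} (hc : MemU ℓ m g h c) :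
    keyF ℓ m g h (aC g h c) = (c.1, c.2.1, c.2.2 \ c.2.1) := by
  rw [memU_iff] at hc
  obtain ⟨u1, u2, u3, u4⟩ := hc
  have haC : ∀ i : Fin n,
      ((aC g h c i = 1) ↔ ((g i = 0 ∧ h i = 1) ∨ (g i = 1 ∧ h i = 0) ∨ i ∈ c.1 ∨
        (i ∈ c.2.2 ∧ i ∉ c.2.1))) ∧
      ((aC g h c i = 2) ↔ (¬((g i = 0 ∧ h i = 1) ∨ (g i = 1 ∧ h i = 0) ∨ i ∈ c.1 ∨
        (i ∈ c.2.2 ∧ i ∉ c.2.1)) ∧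
        ((g i = 2 ∧ ¬ h i = 2) ∨ (h i = 2 ∧ ¬ g i = 2) ∨ i ∈ c.2.1))) := by
    intro i
    unfold aC
    split_ifs with h1 h2 <;>
      refine ⟨?_, ?_⟩ <;> simp_all <;> first | decide | tauto
  refine Prod.ext ?_ (Prod.ext ?_ ?_)
  · ext i
    rw [mem_keyF1]
    constructor
    · rintro ⟨h1, hg, hh, _⟩
      rcases (haC i).1.mp h1 with H | H | H | H
      · rw [hg] at H; exact absurd H.1 (by decide)
      · rw [hh] at H; exact absurd H.2 (by decide)
      · exact H
      · exact absurd (u4 i H.1).1 (by rw [hg]; decide)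
    · intro hi
      obtain ⟨hg, hh, hm⟩ := u1 i hi
      exact ⟨(haC i).1.mpr (by tauto), hg, hh, hm⟩
  · ext i
    rw [mem_keyF2]
    constructor
    · rintro ⟨h2, hg, hh, _⟩
      obtain ⟨-, H⟩ := (haC i).2.mp h2
      rcases H with H | H | H
      · exact absurd hh H.2
      · exact absurd hg H.2
      · exact H
    · intro hi
      obtain ⟨hg, hh, hl⟩ := u2 i hi
      have hnot1 : ¬((g i = 0 ∧ h i = 1) ∨ (g i = 1 ∧ h i = 0) ∨ i ∈ c.1 ∨
          (i ∈ c.2.2 ∧ i ∉ c.2.1)) := by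
        rintro (H | H | H | H)
        · rw [hg] at H; exact absurd H.1 (by decide)
        · rw [hg] at H; exact absurd H.1 (by decide)
        · exact absurd (u1 i H).1 (by rw [hg]; decide)
        · exact H.2 hi
      exact ⟨(haC i).2.mpr ⟨hnot1, Or.inr (Or.inr hi)⟩, hg, hh, hl⟩
  · ext i
    rw [mem_keyF3, Finset.mem_sdiff]
    constructor
    · rintro ⟨h1, hg, hh⟩
      rcases (haC i).1.mp h1 with H | H | H | H
      · rw [hg] at H; exact absurd H.1 (by decide)
      · rw [hg] at H; exact absurd H.1 (by decide)
      · exact absurd (u1 i H).1 (by rw [hg]; decide)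
      · exact H
    · rintro ⟨h22, h21⟩
      obtain ⟨hg, hh⟩ := u4 i h22
      exact ⟨(haC i).1.mpr (by tauto), hg, hh⟩

lemma aC_memUc_iff {ℓ m : Fin n → ℕ} {g h : Lbl n} {c c' : Trip n}
    (hc : MemU ℓ m g h c) (hc' : MemU ℓ m g h c') :
    MemUc ℓ m g h c' (aC g h c) ↔ leT c c' := by
  rw [memUc_iff, keyF_aC hc]
  unfold leT
  constructor
  · rintro ⟨-, h1, h2, h3⟩
    refine ⟨h1, h2, fun i hi => ?_⟩
    by_cases h21 : i ∈ c.2.1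
    · exact hc'.2.2.1 (h2 h21)
    · exact h3 (Finset.mem_sdiff.mpr ⟨hi, h21⟩)
  · rintro ⟨h1, h2, h3⟩
    exact ⟨aC_memP hc, h1, h2, fun i hi => h3 (Finset.mem_sdiff.mp hi).1⟩

lemma exists_yz {ℓ m : Fin n → ℕ} (hl : ∀ i, 2 ≤ ℓ i) (hm : ∀ i, 2 ≤ m i)
    (x : Pt ℓ m) {g h a : Lbl n} (hP : MemP ℓ m g h a) :
    ∃ y z : Pt ℓ m, rT ℓ m x y = g ∧ rT ℓ m y z = a ∧ rT ℓ m x z = h := by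
  rw [memP_iff] at hP
  choose u v h1 h2 h3 using fun i =>
    feas_exists_backward (hl i) (hm i) (x i) (g i) (h i) (a i) (hP i)
  exact ⟨u, v, funext h1, funext h2, funext h3⟩

lemma Mmat_eq_zero (F : Type) [Field F] {ℓ m : Fin n → ℕ} (x : Pt ℓ m) {g h a : Lbl n}
    (hP : ¬ MemP ℓ m g h a) : Mmat F ℓ m x g h a = 0 := by
  ext y z
  rw [Mmat_apply, Matrix.zero_apply, if_neg]
  rintro ⟨h1, h2, h3⟩
  apply hP
  rw [memP_iff]
  intro i
  exact feas_exists_forward (x i) (g i) (h i) (a i)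
    ⟨y i, z i, congrFun h1 i, congrFun h2 i, congrFun h3 i⟩

lemma Bmat_eq_sum (F : Type) [Field F] (ℓ m : Fin n → ℕ) (x : Pt ℓ m)
    (g h : Lbl n) (c : Trip n) :
    Bmat F ℓ m x g h c =
      ∑ a ∈ Finset.univ.filter (fun a : Lbl n => MemUc ℓ m g h c a),
        Mmat F ℓ m x g h a := rfl

/-- span of the `B` matrices over the admissible index set -/
noncomputable def BSpan (F : Type) [Field F] (ℓ m : Fin n → ℕ) (x : Pt ℓ m) :
    Submodule F (Matrix (Pt ℓ m) (Pt ℓ m) F) :=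
  Submodule.span F
    (Set.range fun t : {t : Lbl n × Lbl n × Trip n // MemU ℓ m t.1 t.2.1 t.2.2} =>
      Bmat F ℓ m x t.1.1 t.1.2.1 t.1.2.2)

lemma Bmat_mem_BSpan (F : Type) [Field F] (ℓ m : Fin n → ℕ) (x : Pt ℓ m)
    {g h : Lbl n} {c : Trip n} (hU : MemU ℓ m g h c) :
    Bmat F ℓ m x g h c ∈ BSpan F ℓ m x :=
  Submodule.subset_span ⟨⟨(g, h, c), hU⟩, rfl⟩

lemma card_le_n (s : Finset (Fin n)) : s.card ≤ n := by
  simpa using Finset.card_le_univ s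

lemma Mmat_mem_BSpan (F : Type) [Field F] {ℓ m : Fin n → ℕ} (x : Pt ℓ m)
    (g h a : Lbl n) (hP : MemP ℓ m g h a) :
    Mmat F ℓ m x g h a ∈ BSpan F ℓ m x := by
  suffices H : ∀ N a, cardT (keyF ℓ m g h a) * (n + 1) + (keyF ℓ m g h a).2.1.card ≤ N →
      MemP ℓ m g h a → Mmat F ℓ m x g h a ∈ BSpan F ℓ m x by
    exact H _ a le_rfl hP
  intro N
  induction N using Nat.strong_induction_on with
  | _ N IH =>
  intro a hμ hP
  set k := keyF ℓ m g h a with hk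
  set c : Trip n := (k.1, k.2.1, k.2.1 ∪ k.2.2) with hcdef
  have hU : MemU ℓ m g h c := by
    rw [memU_iff]
    refine ⟨fun i hi => ?_, fun i hi => ?_, Finset.subset_union_left, fun i hi => ?_⟩
    · have := mem_keyF1.mp (show i ∈ (keyF ℓ m g h a).1 from hi); tauto
    · have := mem_keyF2.mp (show i ∈ (keyF ℓ m g h a).2.1 from hi); tauto
    · rcases Finset.mem_union.mp
        (show i ∈ (keyF ℓ m g h a).2.1 ∪ (keyF ℓ m g h a).2.2 from hi) with hi | hi
      · have := mem_keyF2.mp hi; tauto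
      · have := mem_keyF3.mp hi; tauto
  have hmem : a ∈ Finset.univ.filter (fun a' : Lbl n => MemUc ℓ m g h c a') := by
    rw [Finset.mem_filter]
    refine ⟨Finset.mem_univ _, (memUc_iff ℓ m g h c a).mpr ⟨hP, ?_⟩⟩
    exact ⟨subset_rfl, subset_rfl, Finset.subset_union_right⟩
  have hsplit := Finset.add_sum_erase _ (fun a' => Mmat F ℓ m x g h a') hmem
  have hMa : Mmat F ℓ m x g h a = Bmat F ℓ m x g h c -
      ∑ a' ∈ (Finset.univ.filter (fun a' : Lbl n => MemUc ℓ m g h c a')).erase a,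
        Mmat F ℓ m x g h a' := by
    rw [Bmat_eq_sum, ← hsplit]
    exact (add_sub_cancel_right _ _).symm
  rw [hMa]
  refine sub_mem (Bmat_mem_BSpan F ℓ m x hU) (Submodule.sum_mem _ fun a' ha' => ?_)
  obtain ⟨hne, ha'⟩ := Finset.mem_erase.mp ha'
  obtain ⟨hP', hle⟩ := (memUc_iff ℓ m g h c a').mp (Finset.mem_filter.mp ha').2
  set k' := keyF ℓ m g h a' with hk'
  obtain ⟨l1, l2, l3⟩ := hle
  -- cardinality bookkeeping
  have dk : Disjoint k.2.1 k.2.2 := keyF_disjoint ℓ m g h a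
  have dk' : Disjoint k'.2.1 k'.2.2 := keyF_disjoint ℓ m g h a'
  have hsub : k'.2.2 ⊆ (k.2.1 ∪ k.2.2) \ k'.2.1 :=
    Finset.subset_sdiff.mpr ⟨l3, dk'.symm⟩
  have h21u : k'.2.1 ⊆ k.2.1 ∪ k.2.2 := l2.trans Finset.subset_union_left
  have hcard3 : k'.2.2.card ≤ k.2.1.card + k.2.2.card - k'.2.1.card := by
    have := Finset.card_le_card hsub
    rwa [Finset.card_sdiff_of_subset h21u, Finset.card_union_of_disjoint dk] at this
  have hcard1 : k'.1.card ≤ k.1.card := Finset.card_le_card l1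
  have hcard2 : k'.2.1.card ≤ k.2.1.card := Finset.card_le_card l2
  have hne' : k' ≠ k := by
    intro hkk
    exact hne (memP_key_inj hP' hP (hk' ▸ hk ▸ hkk))
  have hlt : cardT k' * (n + 1) + k'.2.1.card < cardT k * (n + 1) + k.2.1.card := by
    unfold cardT
    rcases lt_or_eq_of_le
        (show k'.1.card + k'.2.1.card + k'.2.2.card ≤ k.1.card + k.2.1.card + k.2.2.card by
          omega) with hlt | heq
    · have b1 := card_le_n k'.2.1
      have b2 := card_le_n k.2.1
      nlinarith
    · -- total cards equal; show second component strictly smaller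
      have e1 : k'.1 = k.1 := Finset.eq_of_subset_of_card_le l1 (by omega)
      have e3card : k'.2.2.card = k.2.1.card + k.2.2.card - k'.2.1.card := by omega
      have e3 : k'.2.2 = (k.2.1 ∪ k.2.2) \ k'.2.1 := by
        apply Finset.eq_of_subset_of_card_le hsub
        rw [Finset.card_sdiff_of_subset h21u, Finset.card_union_of_disjoint dk]
        omega
      have h21lt : k'.2.1.card < k.2.1.card := by
        rcases lt_or_eq_of_le hcard2 with hlt2 | heq2
        · exact hlt2
        · exfalso
          have e2 : k'.2.1 = k.2.1 := Finset.eq_of_subset_of_card_le l2 (by omega)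
          have e3' : k'.2.2 = k.2.2 := by
            rw [e3, e2, Finset.union_sdiff_cancel_left dk]
          exact hne' (Prod.ext e1 (Prod.ext e2 e3'))
      rw [heq]
      exact Nat.add_lt_add_left h21lt _
  exact IH (cardT k' * (n + 1) + k'.2.1.card) (lt_of_lt_of_le hlt hμ) a'
    (le_of_eq (by rw [hk'])) hP'


lemma Mmat_mem_Talg (F : Type) [Field F] (ℓ m : Fin n → ℕ) (x : Pt ℓ m) (g h a : Lbl n) :
    Mmat F ℓ m x g h a ∈ Talg F ℓ m x := by
  have hA : Amat F ℓ m a ∈ Talg F ℓ m x :=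
    Algebra.subset_adjoin (Set.mem_union_left _ ⟨a, rfl⟩)
  have hE : ∀ g', Estar F ℓ m x g' ∈ Talg F ℓ m x := fun g' =>
    Algebra.subset_adjoin (Set.mem_union_right _ ⟨g', rfl⟩)
  exact mul_mem (mul_mem (hE g) hA) (hE h)

lemma BSpan_eq_Talg (F : Type) [Field F] (ℓ m : Fin n → ℕ) (x : Pt ℓ m) :
    BSpan F ℓ m x = Subalgebra.toSubmodule (Talg F ℓ m x) := by
  apply le_antisymm
  · rw [BSpan, Submodule.span_le]
    rintro M ⟨t, rfl⟩
    show Bmat F ℓ m x t.1.1 t.1.2.1 t.1.2.2 ∈ Talg F ℓ m x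
    rw [Bmat_eq_sum]
    exact sum_mem fun a _ => Mmat_mem_Talg F ℓ m x _ _ a
  · rw [Talg_toSubmodule_eq, MSpan, Submodule.span_le]
    rintro M ⟨g, h, a, rfl⟩
    by_cases hP : MemP ℓ m g h a
    · exact Mmat_mem_BSpan F x g h a hP
    · rw [Mmat_eq_zero F x hP]
      exact zero_mem _

lemma cardT_le_3n (c : Trip n) : cardT c ≤ 3 * n := by
  have h1 := card_le_n c.1
  have h2 := card_le_n c.2.1
  have h3 := card_le_n c.2.2
  unfold cardT
  omega

lemma cardT_lt_of_leT_ne {c c' : Trip n} (hle : leT c c') (hne : c ≠ c') :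
    cardT c < cardT c' := by
  obtain ⟨s1, s2, s3⟩ := hle
  have h1 : c.1.card ≤ c'.1.card := Finset.card_le_card s1
  have h2 : c.2.1.card ≤ c'.2.1.card := Finset.card_le_card s2
  have h3 : c.2.2.card ≤ c'.2.2.card := Finset.card_le_card s3
  unfold cardT
  rcases lt_or_eq_of_le h1 with h | e1
  · omega
  rcases lt_or_eq_of_le h2 with h | e2
  · omega
  rcases lt_or_eq_of_le h3 with h | e3
  · omega
  exfalso
  exact hne (Prod.ext (Finset.eq_of_subset_of_card_le s1 (le_of_eq e1.symm))
    (Prod.ext (Finset.eq_of_subset_of_card_le s2 (le_of_eq e2.symm))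
      (Finset.eq_of_subset_of_card_le s3 (le_of_eq e3.symm))))

set_option maxHeartbeats 1000000 in
lemma Bmat_linearIndependent (F : Type) [Field F] {ℓ m : Fin n → ℕ}
    (hl : ∀ i, 2 ≤ ℓ i) (hm : ∀ i, 2 ≤ m i) (x : Pt ℓ m) :
    LinearIndependent F
      (fun t : {t : Lbl n × Lbl n × Trip n // MemU ℓ m t.1 t.2.1 t.2.2} =>
        Bmat F ℓ m x t.1.1 t.1.2.1 t.1.2.2) := by
  rw [Fintype.linearIndependent_iff]
  intro f hsum
  suffices H : ∀ N (t : {t : Lbl n × Lbl n × Trip n // MemU ℓ m t.1 t.2.1 t.2.2}),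
      3 * n - cardT t.1.2.2 ≤ N → f t = 0 by
    intro t; exact H _ t le_rfl
  intro N
  induction N using Nat.strong_induction_on with
  | _ N IH =>
  rintro ⟨⟨g, h, c⟩, hU⟩ hN
  have hNc : 3 * n - cardT c ≤ N := hN
  clear hN
  have hP : MemP ℓ m g h (aC g h c) := aC_memP hU
  obtain ⟨y, z, hy, ha, hz⟩ := exists_yz hl hm x hP
  have hBval : ∀ (t' : {t : Lbl n × Lbl n × Trip n // MemU ℓ m t.1 t.2.1 t.2.2}),
      Bmat F ℓ m x t'.1.1 t'.1.2.1 t'.1.2.2 y z =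
      if g = t'.1.1 ∧ h = t'.1.2.1 ∧ MemUc ℓ m t'.1.1 t'.1.2.1 t'.1.2.2 (aC g h c)
        then (1:F) else 0 := by
    rintro ⟨⟨g', h', c'⟩, hU'⟩
    rw [Bmat_eq_sum, Matrix.sum_apply]
    simp only [Mmat_apply, hy, hz, ha]
    by_cases H1 : g = g' ∧ h = h'
    · have step : ∀ a' : Lbl n,
          (if g = g' ∧ aC g h c = a' ∧ h = h' then (1:F) else 0) =
          (if aC g h c = a' then (1:F) else 0) := by
        intro a'; split_ifs <;> simp_all
      rw [Finset.sum_congr rfl fun a' _ => step a', Finset.sum_ite_eq]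
      simp only [Finset.mem_filter, Finset.mem_univ, true_and]
      rcases H1 with ⟨e1, e2⟩
      by_cases H2 : MemUc ℓ m g' h' c' (aC g h c)
      · rw [if_pos H2, if_pos ⟨e1, e2, H2⟩]
      · rw [if_neg H2, if_neg (by tauto)]
    · have step : ∀ a' : Lbl n,
          (if g = g' ∧ aC g h c = a' ∧ h = h' then (1:F) else 0) = 0 := by
        intro a'; split_ifs <;> simp_all <;> tauto
      rw [Finset.sum_congr rfl fun a' _ => step a', Finset.sum_const, smul_zero,
        if_neg (by tauto)]
  have hentry : ∑ t' : {t : Lbl n × Lbl n × Trip n // MemU ℓ m t.1 t.2.1 t.2.2},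
      (if g = t'.1.1 ∧ h = t'.1.2.1 ∧ MemUc ℓ m t'.1.1 t'.1.2.1 t'.1.2.2 (aC g h c)
        then f t' else 0) = 0 := by
    have h0 := congrFun (congrFun hsum y) z
    have h1 : ∑ t' : {t : Lbl n × Lbl n × Trip n // MemU ℓ m t.1 t.2.1 t.2.2},
        f t' * Bmat F ℓ m x t'.1.1 t'.1.2.1 t'.1.2.2 y z = 0 := by
      simpa [Matrix.sum_apply, Matrix.smul_apply, smul_eq_mul] using h0
    conv_rhs => rw [← h1]
    exact Finset.sum_congr rfl fun t' _ => by
      rw [hBval t', mul_ite, mul_one, mul_zero]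
  set G : {t : Lbl n × Lbl n × Trip n // MemU ℓ m t.1 t.2.1 t.2.2} → F :=
    fun t' => if g = t'.1.1 ∧ h = t'.1.2.1 ∧
      MemUc ℓ m t'.1.1 t'.1.2.1 t'.1.2.2 (aC g h c) then f t' else 0 with hG
  have hsplit : G ⟨(g, h, c), hU⟩ + ∑ t' ∈ Finset.univ.erase ⟨(g, h, c), hU⟩, G t' =
      ∑ t' : {t : Lbl n × Lbl n × Trip n // MemU ℓ m t.1 t.2.1 t.2.2}, G t' :=
    Finset.add_sum_erase Finset.univ G (Finset.mem_univ _)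
  have ht0cond : MemUc ℓ m g h c (aC g h c) :=
    (aC_memUc_iff hU hU).mpr ⟨subset_rfl, subset_rfl, subset_rfl⟩
  have herase : ∀ t' ∈ Finset.univ.erase
      (⟨(g, h, c), hU⟩ : {t : Lbl n × Lbl n × Trip n // MemU ℓ m t.1 t.2.1 t.2.2}),
      G t' = 0 := by
    intro t' ht'
    obtain ⟨hne, -⟩ := Finset.mem_erase.mp ht'
    rw [hG]
    simp only
    split_ifs with hcond
    · obtain ⟨e1, e2, hUc⟩ := hcond
      obtain ⟨⟨g', h', c'⟩, hU'⟩ := t'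
      simp only at e1 e2 hUc
      subst e1; subst e2
      have hle : leT c c' := (aC_memUc_iff hU hU').mp hUc
      have hcc : c ≠ c' := by
        intro e
        apply hne
        apply Subtype.ext
        show (g, h, c') = (g, h, c)
        rw [← e]
      have hlt := cardT_lt_of_leT_ne hle hcc
      have hb := cardT_le_3n (n := n) c'
      exact IH (3 * n - cardT c') (by omega) ⟨(g, h, c'), hU'⟩ le_rfl
    · rfl
  have hfinal : G ⟨(g, h, c), hU⟩ = 0 := by
    rw [hentry] at hsplit
    rwa [Finset.sum_eq_zero herase, add_zero] at hsplit
  rw [hG] at hfinal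
  simpa [ht0cond] using hfinal


/-! ### Cardinality -/

/-- local condition describing one coordinate of an element of the index set -/
def locL (li mi : ℕ) (d : Fin 3 × Fin 3 × Bool × Bool × Bool) : Prop :=
  (d.2.2.1 = true → (d.1 = 1 ∧ d.2.1 = 1 ∧ 2 < mi)) ∧
  (d.2.2.2.1 = true → (d.1 = 2 ∧ d.2.1 = 2 ∧ 2 < li ∧ d.2.2.2.2 = true)) ∧
  (d.2.2.2.2 = true → (d.1 = 2 ∧ d.2.1 = 2))

lemma memU_iff_loc (ℓ m : Fin n → ℕ) (g h : Lbl n) (c : Trip n) :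
    MemU ℓ m g h c ↔ ∀ i : Fin n, locL (ℓ i) (m i)
      (g i, h i, decide (i ∈ c.1), decide (i ∈ c.2.1), decide (i ∈ c.2.2)) := by
  rw [memU_iff]
  unfold locL
  simp only [decide_eq_true_eq]
  constructor
  · rintro ⟨u1, u2, u3, u4⟩ i
    exact ⟨fun hi => u1 i hi, fun hi => ⟨(u2 i hi).1, (u2 i hi).2.1, (u2 i hi).2.2, u3 hi⟩,
      fun hi => u4 i hi⟩
  · intro H
    refine ⟨fun i hi => (H i).1 hi, fun i hi => ⟨((H i).2.1 hi).1, ((H i).2.1 hi).2.1,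
      ((H i).2.1 hi).2.2.1⟩, fun i hi => ((H i).2.1 hi).2.2.2, fun i hi => (H i).2.2 hi⟩

noncomputable def idxEquiv (ℓ m : Fin n → ℕ) :
    {t : Lbl n × Lbl n × Trip n // MemU ℓ m t.1 t.2.1 t.2.2} ≃
      (∀ i : Fin n, {d : Fin 3 × Fin 3 × Bool × Bool × Bool // locL (ℓ i) (m i) d}) where
  toFun t := fun i => ⟨(t.1.1 i, t.1.2.1 i, decide (i ∈ t.1.2.2.1),
      decide (i ∈ t.1.2.2.2.1), decide (i ∈ t.1.2.2.2.2)),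
    ((memU_iff_loc ℓ m t.1.1 t.1.2.1 t.1.2.2).mp t.2) i⟩
  invFun F := ⟨(fun i => (F i).1.1, fun i => (F i).1.2.1,
      (Finset.univ.filter fun i => (F i).1.2.2.1 = true,
       Finset.univ.filter fun i => (F i).1.2.2.2.1 = true,
       Finset.univ.filter fun i => (F i).1.2.2.2.2 = true)), by
    rw [memU_iff_loc]
    intro i
    simp only [Finset.mem_filter, Finset.mem_univ, true_and, decide_eq_true_eq]
    have := (F i).2
    unfold locL at this ⊢
    simpa using this⟩
  left_inv := by
    rintro ⟨⟨g, h, S1, S2, S3⟩, hU⟩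
    apply Subtype.ext
    simp only
    refine Prod.ext rfl (Prod.ext rfl ?_)
    refine Prod.ext ?_ (Prod.ext ?_ ?_) <;> · ext i; simp
  right_inv := by
    intro F
    funext i
    apply Subtype.ext
    simp

lemma card_locL (li mi : ℕ) (hl : 2 ≤ li) (hm : 2 ≤ mi) :
    Nat.card {d : Fin 3 × Fin 3 × Bool × Bool × Bool // locL li mi d} =
      if 2 < li then (if 2 < mi then 12 else 11) else (if 2 < mi then 11 else 10) := by
  by_cases h1 : 2 < li <;> by_cases h2 : 2 < mi <;> simp only [h1, h2, if_true, if_false]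
  · rw [Nat.card_congr (Equiv.subtypeEquivRight (q := fun d : Fin 3 × Fin 3 × Bool × Bool × Bool =>
      (d.2.2.1 = true → (d.1 = 1 ∧ d.2.1 = 1)) ∧
      (d.2.2.2.1 = true → (d.1 = 2 ∧ d.2.1 = 2 ∧ d.2.2.2.2 = true)) ∧
      (d.2.2.2.2 = true → (d.1 = 2 ∧ d.2.1 = 2)))
      (fun d => by unfold locL; simp [h1, h2]))]
    rw [Nat.card_eq_fintype_card]
    decide
  · rw [Nat.card_congr (Equiv.subtypeEquivRight (q := fun d : Fin 3 × Fin 3 × Bool × Bool × Bool =>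
      (d.2.2.1 = false) ∧
      (d.2.2.2.1 = true → (d.1 = 2 ∧ d.2.1 = 2 ∧ d.2.2.2.2 = true)) ∧
      (d.2.2.2.2 = true → (d.1 = 2 ∧ d.2.1 = 2)))
      (fun d => by unfold locL; simp [h1, h2]))]
    rw [Nat.card_eq_fintype_card]
    decide
  · rw [Nat.card_congr (Equiv.subtypeEquivRight (q := fun d : Fin 3 × Fin 3 × Bool × Bool × Bool =>
      (d.2.2.1 = true → (d.1 = 1 ∧ d.2.1 = 1)) ∧
      (d.2.2.2.1 = false) ∧
      (d.2.2.2.2 = true → (d.1 = 2 ∧ d.2.1 = 2)))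
      (fun d => by unfold locL; simp [h1, h2]))]
    rw [Nat.card_eq_fintype_card]
    decide
  · rw [Nat.card_congr (Equiv.subtypeEquivRight (q := fun d : Fin 3 × Fin 3 × Bool × Bool × Bool =>
      (d.2.2.1 = false) ∧
      (d.2.2.2.1 = false) ∧
      (d.2.2.2.2 = true → (d.1 = 2 ∧ d.2.1 = 2)))
      (fun d => by unfold locL; simp [h1, h2]))]
    rw [Nat.card_eq_fintype_card]
    decide


/-- The family `(B_{g,h,𝔠})` indexed by `{(g,h,𝔠) : 𝔠 ∈ U_{g,h}}` is an `F`-basis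
of `T`, and the cardinality of this index set is `2^(n₁+2n₄) · 3^(n₄) · 5^(n₁) · 11^(n₂+n₃)`. -/
theorem statement3 (F : Type) [Field F] (n : ℕ) (hn : 1 ≤ n) (ℓ m : Fin n → ℕ)
    (hℓ : ∀ i, 2 ≤ ℓ i) (hm : ∀ i, 2 ≤ m i) (x : Pt ℓ m)
    (n1 n2 n3 n4 : ℕ)
    (hn1 : n1 = (Finset.univ.filter fun a : Fin n => ℓ a = 2 ∧ m a = 2).card)
    (hn2 : n2 = (Finset.univ.filter fun a : Fin n => 2 < ℓ a ∧ m a = 2).card)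
    (hn3 : n3 = (Finset.univ.filter fun a : Fin n => 2 < m a ∧ ℓ a = 2).card)
    (hn4 : n4 = (Finset.univ.filter fun a : Fin n => 2 < ℓ a ∧ 2 < m a).card) :
    LinearIndependent F
      (fun t : {t : Lbl n × Lbl n × Trip n // MemU ℓ m t.1 t.2.1 t.2.2} =>
        Bmat F ℓ m x t.1.1 t.1.2.1 t.1.2.2) ∧
    Submodule.span F
      (Set.range fun t : {t : Lbl n × Lbl n × Trip n // MemU ℓ m t.1 t.2.1 t.2.2} =>
        Bmat F ℓ m x t.1.1 t.1.2.1 t.1.2.2) =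
      Subalgebra.toSubmodule (Talg F ℓ m x) ∧
    Nat.card {t : Lbl n × Lbl n × Trip n // MemU ℓ m t.1 t.2.1 t.2.2} =
      2 ^ (n1 + 2 * n4) * 3 ^ n4 * 5 ^ n1 * 11 ^ (n2 + n3) := by
  refine ⟨Bmat_linearIndependent F hℓ hm x, BSpan_eq_Talg F ℓ m x, ?_⟩
  rw [Nat.card_congr (idxEquiv ℓ m), Nat.card_pi]
  have hcard : ∀ i : Fin n, Nat.card {d : Fin 3 × Fin 3 × Bool × Bool × Bool //
      locL (ℓ i) (m i) d} =
      (if 2 < ℓ i then (if 2 < m i then 12 else 11) else (if 2 < m i then 11 else 10)) :=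
    fun i => card_locL _ _ (hℓ i) (hm i)
  rw [Finset.prod_congr rfl fun i _ => hcard i, Finset.prod_ite, Finset.prod_ite,
    Finset.prod_ite, Finset.prod_const, Finset.prod_const, Finset.prod_const,
    Finset.prod_const, Finset.filter_filter, Finset.filter_filter, Finset.filter_filter,
    Finset.filter_filter]
  have e4 : Finset.univ.filter (fun i : Fin n => 2 < ℓ i ∧ 2 < m i) =
      Finset.univ.filter (fun a : Fin n => 2 < ℓ a ∧ 2 < m a) := rfl
  have e2 : Finset.univ.filter (fun i : Fin n => 2 < ℓ i ∧ ¬ 2 < m i) =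
      Finset.univ.filter (fun a : Fin n => 2 < ℓ a ∧ m a = 2) := by
    apply Finset.filter_congr
    intro i _
    have := hm i
    constructor
    · rintro ⟨h1, h2⟩; exact ⟨h1, by omega⟩
    · rintro ⟨h1, h2⟩; exact ⟨h1, by omega⟩
  have e3 : Finset.univ.filter (fun i : Fin n => ¬ 2 < ℓ i ∧ 2 < m i) =
      Finset.univ.filter (fun a : Fin n => 2 < m a ∧ ℓ a = 2) := by
    apply Finset.filter_congr
    intro i _
    have := hℓ i
    constructor
    · rintro ⟨h1, h2⟩; exact ⟨h2, by omega⟩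
    · rintro ⟨h1, h2⟩; exact ⟨by omega, h1⟩
  have e1 : Finset.univ.filter (fun i : Fin n => ¬ 2 < ℓ i ∧ ¬ 2 < m i) =
      Finset.univ.filter (fun a : Fin n => ℓ a = 2 ∧ m a = 2) := by
    apply Finset.filter_congr
    intro i _
    have := hℓ i
    have := hm i
    constructor
    · rintro ⟨h1, h2⟩; exact ⟨by omega, by omega⟩
    · rintro ⟨h1, h2⟩; exact ⟨by omega, by omega⟩
  rw [e1, e2, e3, e4, ← hn1, ← hn2, ← hn3, ← hn4]
  rw [show (12:ℕ) = 2 ^ 2 * 3 from rfl, show (10:ℕ) = 2 * 5 from rfl, mul_pow, mul_pow,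
    pow_add, pow_add, pow_mul]
  ring


end GDScheme
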